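/- Satisfiability via translation: A sentential first-order standpoint logic formula φ in standpoint standard normal form is satisfiable if and only if the first-order formula Trans_{|φ|}(φ) is satisfiable, where |φ| is the number of subformulas of φ. -/

import Mathlib

namespace FOSL

/-- Standpoint expressions: e ::= * | s | e∪e | e∩e | e∖e -/
inductive SE (S : Type) : Type
  | star : SE S
  | sym : S → SE S
  | union : SE S → SE S → SE S
  | inter : SE S → SE S → SE S
  | diff : SE S → SE S → SE S

/-- FOSL formulas over predicates `P` (with arities `ar`), constants `C`,
standpoint symbols `S`; variables are natural numbers. -/
inductive Fm (P : Type) (ar : P → ℕ) (C : Type) (S : Type) : Type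
  | atom : (p : P) → (Fin (ar p) → C ⊕ ℕ) → Fm P ar C S
  | eq : (C ⊕ ℕ) → (C ⊕ ℕ) → Fm P ar C S
  | neg : Fm P ar C S → Fm P ar C S
  | conj : Fm P ar C S → Fm P ar C S → Fm P ar C S
  | all : ℕ → Fm P ar C S → Fm P ar C S
  | box : SE S → Fm P ar C S → Fm P ar C S

variable {P : Type} {ar : P → ℕ} {C S : Type}

def Fm.disj (φ ψ : Fm P ar C S) : Fm P ar C S := .neg (.conj (.neg φ) (.neg ψ))
def Fm.impl (φ ψ : Fm P ar C S) : Fm P ar C S := .neg (.conj φ (.neg ψ))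
def Fm.ex (x : ℕ) (φ : Fm P ar C S) : Fm P ar C S := .neg (.all x (.neg φ))
def Fm.dia (e : SE S) (φ : Fm P ar C S) : Fm P ar C S := .neg (.box e (.neg φ))

/-- First-order standpoint structures (constant domain, rigid constants). -/
structure Model (P : Type) (ar : P → ℕ) (C : Type) (S : Type) : Type 1 where
  Dom : Type
  dom_ne : Nonempty Dom
  Prec : Type
  prec_ne : Nonempty Prec
  σ : S → Set Prec
  interpP : Prec → (p : P) → (Fin (ar p) → Dom) → Prop
  interpC : C → Dom

/-- Homomorphic extension of σ to standpoint expressions, with σ(*) = Π. -/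
def Model.σE (M : Model P ar C S) : SE S → Set M.Prec
  | .star => Set.univ
  | .sym s => M.σ s
  | .union e1 e2 => M.σE e1 ∪ M.σE e2
  | .inter e1 e2 => M.σE e1 ∩ M.σE e2
  | .diff e1 e2 => M.σE e1 \ M.σE e2

def Model.termVal (M : Model P ar C S) (v : ℕ → M.Dom) : C ⊕ ℕ → M.Dom
  | .inl c => M.interpC c
  | .inr x => v x

/-- Satisfaction `M, π, v ⊨ φ`. -/
def Model.sat (M : Model P ar C S) : M.Prec → (ℕ → M.Dom) → Fm P ar C S → Prop
  | π, v, .atom p ts => M.interpP π p fun i => M.termVal v (ts i)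
  | _, v, .eq t1 t2 => M.termVal v t1 = M.termVal v t2
  | π, v, .neg φ => ¬ M.sat π v φ
  | π, v, .conj φ ψ => M.sat π v φ ∧ M.sat π v ψ
  | π, v, .all x φ => ∀ δ : M.Dom, M.sat π (Function.update v x δ) φ
  | _, v, .box e φ => ∀ π' ∈ M.σE e, M.sat π' v φ

/-- `M ⊨ φ`: satisfaction at all precisifications and assignments. -/
def Model.satM (M : Model P ar C S) (φ : Fm P ar C S) : Prop :=
  ∀ (π : M.Prec) (v : ℕ → M.Dom), M.sat π v φ

def tmVars : C ⊕ ℕ → Finset ℕ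
  | .inl _ => ∅
  | .inr x => {x}

/-- Free variables. -/
def Fm.fv : Fm P ar C S → Finset ℕ
  | .atom _ ts => Finset.univ.biUnion fun i => tmVars (ts i)
  | .eq t1 t2 => tmVars t1 ∪ tmVars t2
  | .neg φ => φ.fv
  | .conj φ ψ => φ.fv ∪ ψ.fv
  | .all x φ => φ.fv.erase x
  | .box _ φ => φ.fv

/-- Sentential: in every subformula □_e ψ, ψ has no free variables. -/
def Fm.sentential : Fm P ar C S → Prop
  | .atom _ _ => True
  | .eq _ _ => True
  | .neg φ => φ.sentential
  | .conj φ ψ => φ.sentential ∧ ψ.sentential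
  | .all _ φ => φ.sentential
  | .box _ φ => φ.fv = ∅ ∧ φ.sentential

/-- Set of subformulas. -/
def Fm.Sub : Fm P ar C S → Set (Fm P ar C S)
  | .atom p ts => {.atom p ts}
  | .eq t1 t2 => {.eq t1 t2}
  | .neg φ => insert (.neg φ) φ.Sub
  | .conj φ ψ => insert (.conj φ ψ) (φ.Sub ∪ ψ.Sub)
  | .all x φ => insert (.all x φ) φ.Sub
  | .box e φ => insert (.box e φ) φ.Sub

/-- |φ| = number of subformulas of φ. -/
noncomputable def Fm.size (φ : Fm P ar C S) : ℕ := φ.Sub.ncard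

def satisfiable (φ : Fm P ar C S) : Prop := ∃ M : Model P ar C S, M.satM φ

/-- n-satisfiable: has a model with exactly n precisifications. -/
def nsatisfiable (n : ℕ) (φ : Fm P ar C S) : Prop :=
  ∃ M : Model P ar C S, M.satM φ ∧ Nat.card M.Prec = n

def Fm.boxfree : Fm P ar C S → Prop
  | .atom _ _ => True
  | .eq _ _ => True
  | .neg φ => φ.boxfree
  | .conj φ ψ => φ.boxfree ∧ ψ.boxfree
  | .all _ φ => φ.boxfree
  | .box _ _ => False

/-- Standpoint standard normal form: no nested modalities. -/
def Fm.ssnf : Fm P ar C S → Prop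
  | .atom _ _ => True
  | .eq _ _ => True
  | .neg φ => φ.ssnf
  | .conj φ ψ => φ.ssnf ∧ ψ.ssnf
  | .all _ φ => φ.ssnf
  | .box _ φ => φ.boxfree

/-- Restriction of a standpoint structure to a nonempty subset of precisifications. -/
def Model.restrict (M : Model P ar C S) (Ps : Set M.Prec) (h : Ps.Nonempty) :
    Model P ar C S where
  Dom := M.Dom
  dom_ne := M.dom_ne
  Prec := Ps
  prec_ne := h.to_subtype
  σ := fun s => {π : Ps | (π : M.Prec) ∈ M.σ s}
  interpP := fun π => M.interpP π
  interpC := M.interpC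

/-! ### Plain first-order logic -/

inductive FO (Q : Type) (arQ : Q → ℕ) (C : Type) : Type
  | tt
  | atom (q : Q) (ts : Fin (arQ q) → C ⊕ ℕ)
  | eq (t1 t2 : C ⊕ ℕ)
  | neg (φ : FO Q arQ C)
  | conj (φ ψ : FO Q arQ C)
  | all (x : ℕ) (φ : FO Q arQ C)

variable {Q : Type} {arQ : Q → ℕ}

def FO.impl (φ ψ : FO Q arQ C) : FO Q arQ C := .neg (.conj φ (.neg ψ))

def FO.conjList : List (FO Q arQ C) → FO Q arQ C
  | [] => .tt
  | φ :: l => .conj φ (FO.conjList l)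

structure FOModel (Q : Type) (arQ : Q → ℕ) (C : Type) : Type 1 where
  Dom : Type
  dom_ne : Nonempty Dom
  interp : (q : Q) → (Fin (arQ q) → Dom) → Prop
  interpC : C → Dom

def FOModel.termVal (I : FOModel Q arQ C) (v : ℕ → I.Dom) : C ⊕ ℕ → I.Dom
  | .inl c => I.interpC c
  | .inr x => v x

def FOModel.sat (I : FOModel Q arQ C) : (ℕ → I.Dom) → FO Q arQ C → Prop
  | _, .tt => True
  | v, .atom q ts => I.interp q fun i => I.termVal v (ts i)
  | v, .eq t1 t2 => I.termVal v t1 = I.termVal v t2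
  | v, .neg φ => ¬ I.sat v φ
  | v, .conj φ ψ => I.sat v φ ∧ I.sat v ψ
  | v, .all x φ => ∀ δ : I.Dom, I.sat (Function.update v x δ) φ

def FOModel.satM (I : FOModel Q arQ C) (φ : FO Q arQ C) : Prop := ∀ v, I.sat v φ

def fosatisfiable (φ : FO Q arQ C) : Prop := ∃ I : FOModel Q arQ C, I.satM φ

/-! ### Translation to plain FO -/

/-- Translated vocabulary: a predicate P_π for each P and π, and nullary
predicates s_π (for `some s`) and *_π (for `none`). -/
abbrev TQ (P S Pre : Type) : Type := (P × Pre) ⊕ (Option S × Pre)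

def tAr (ar : P → ℕ) {S Pre : Type} : TQ P S Pre → ℕ
  | .inl (p, _) => ar p
  | .inr _ => 0

variable {Pre : Type}

/-- trans_E(π, e). -/
def transE (π : Pre) : SE S → FO (TQ P S Pre) (tAr ar) C
  | .star => .atom (.inr (none, π)) Fin.elim0
  | .sym s => .atom (.inr (some s, π)) Fin.elim0
  | .union e1 e2 => .neg (.conj (.neg (transE π e1)) (.neg (transE π e2)))
  | .inter e1 e2 => .conj (transE π e1) (transE π e2)
  | .diff e1 e2 => .conj (transE π e1) (.neg (transE π e2))

/-- trans_n(π, φ). -/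
noncomputable def transF [Fintype Pre] (π : Pre) : Fm P ar C S → FO (TQ P S Pre) (tAr ar) C
  | .atom p ts => .atom (.inl (p, π)) ts
  | .eq t1 t2 => .eq t1 t2
  | .neg φ => .neg (transF π φ)
  | .conj φ ψ => .conj (transF π φ) (transF π ψ)
  | .all x φ => .all x (transF π φ)
  | .box e φ =>
      FO.conjList ((Finset.univ.toList).map fun π' : Pre =>
        FO.impl (transE π' e) (transF π' φ))

/-- Trans_n(φ) = ⋀_π trans_n(π, φ) ∧ ⋀_π *_π. -/
noncomputable def TransN [Fintype Pre] (φ : Fm P ar C S) : FO (TQ P S Pre) (tAr ar) C :=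
  .conj (FO.conjList ((Finset.univ.toList).map fun π : Pre => transF π φ))
        (FO.conjList ((Finset.univ.toList).map fun π : Pre =>
          FO.atom (.inr (none, π)) Fin.elim0))

/-- The plain first-order structure I_M associated with a standpoint structure M. -/
def Model.toFO (M : Model P ar C S) : FOModel (TQ P S M.Prec) (tAr ar) C where
  Dom := M.Dom
  dom_ne := M.dom_ne
  interp := fun q => match q with
    | .inl (p, π) => fun args => M.interpP π p args
    | .inr (none, _) => fun _ => True
    | .inr (some s, π) => fun _ => π ∈ M.σ s
  interpC := M.interpC

/-!
A standpoint structure `M` can be pulled back along any map `g : A → Π` into its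
precisifications. For an SSNF formula the pullback satisfies the same formulas at `a` as `M`
at `g a`, provided every modal subformula `□_e ψ` that fails in `M` fails at some precisification
in the range of `g`: the bodies `ψ` are box-free, so their truth only depends on the
precisification, and `□_e ψ` can only become true by losing all its counterexamples. When `φ`
is sentential, each `ψ` is closed, so one counterexample per subformula suffices, and `φ` has a
model over `Fin |φ|`. Standpoint structures over a finite set `Π` are the same thing as
first-order structures of the translated vocabulary in which the `*_π` hold, and `Trans`
expresses satisfaction under this correspondence.
-/

instance Model.instNonemptyPrec (M : Model P ar C S) : Nonempty M.Prec := M.prec_ne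

instance Model.instNonemptyDom (M : Model P ar C S) : Nonempty M.Dom := M.dom_ne

lemma Fm.mem_Sub_self (φ : Fm P ar C S) : φ ∈ φ.Sub := by
  cases φ <;> simp [Fm.Sub]

lemma Fm.finite_Sub (φ : Fm P ar C S) : φ.Sub.Finite := by
  induction φ with
  | atom | eq => exact Set.finite_singleton _
  | neg _ ih | all _ _ ih | box _ _ ih => exact ih.insert _
  | conj _ _ ih₁ ih₂ => exact (ih₁.union ih₂).insert _

instance Fm.neZero_size (φ : Fm P ar C S) : NeZero φ.size :=
  ⟨((Set.ncard_pos φ.finite_Sub).mpr ⟨φ, φ.mem_Sub_self⟩).ne'⟩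

lemma Fm.sentential_of_mem_Sub {φ χ : Fm P ar C S} (hφ : φ.sentential) (hχ : χ ∈ φ.Sub) :
    χ.sentential := by
  induction φ with
  | atom | eq => simp only [Fm.Sub, Set.mem_singleton_iff] at hχ; subst hχ; trivial
  | neg φ ih | all _ φ ih =>
    obtain rfl | hχ := hχ
    exacts [hφ, ih hφ hχ]
  | box e φ ih =>
    obtain rfl | hχ := hχ
    exacts [hφ, ih hφ.2 hχ]
  | conj φ ψ ih₁ ih₂ =>
    obtain rfl | hχ | hχ := hχ
    exacts [hφ, ih₁ hφ.1 hχ, ih₂ hφ.2 hχ]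

lemma Model.termVal_congr (M : Model P ar C S) {v v' : ℕ → M.Dom} {t : C ⊕ ℕ}
    (h : ∀ x ∈ tmVars (C := C) t, v x = v' x) : M.termVal v t = M.termVal v' t := by
  cases t with
  | inl c => rfl
  | inr x => exact h x (Finset.mem_singleton_self x)

lemma Model.sat_congr (M : Model P ar C S) {φ : Fm P ar C S} {π : M.Prec} {v v' : ℕ → M.Dom}
    (h : ∀ x ∈ φ.fv, v x = v' x) : M.sat π v φ ↔ M.sat π v' φ := by
  induction φ generalizing π v v' with
  | atom p ts =>
    refine iff_of_eq (congrArg _ (funext fun i => M.termVal_congr fun x hx => h x ?_))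
    exact Finset.mem_biUnion.mpr ⟨i, Finset.mem_univ i, hx⟩
  | eq t₁ t₂ =>
    simp only [Model.sat, Fm.fv, Finset.mem_union] at h ⊢
    rw [M.termVal_congr fun x hx => h x (.inl hx), M.termVal_congr fun x hx => h x (.inr hx)]
  | neg φ ih => exact not_congr (ih h)
  | conj φ ψ ih₁ ih₂ =>
    simp only [Fm.fv, Finset.mem_union] at h
    exact and_congr (ih₁ fun x hx => h x (.inl hx)) (ih₂ fun x hx => h x (.inr hx))
  | all x φ ih =>
    refine forall_congr' fun δ => ih fun y hy => ?_
    by_cases hyx : y = x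
    · simp [hyx]
    · simpa [Function.update_of_ne hyx] using h y (Finset.mem_erase.mpr ⟨hyx, hy⟩)
  | box e φ ih => exact forall₂_congr fun π' _ => ih h

lemma Model.sat_of_fv_eq_empty (M : Model P ar C S) {φ : Fm P ar C S} (hφ : φ.fv = ∅)
    {π : M.Prec} (v v' : ℕ → M.Dom) : M.sat π v φ ↔ M.sat π v' φ :=
  M.sat_congr (by simp [hφ])

def Model.comap (M : Model P ar C S) {A : Type} [Nonempty A] (g : A → M.Prec) :
    Model P ar C S where
  Dom := M.Dom
  dom_ne := M.dom_ne
  Prec := A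
  prec_ne := ‹_›
  σ s := g ⁻¹' M.σ s
  interpP a := M.interpP (g a)
  interpC := M.interpC

section Comap

variable {A : Type} (M : Model P ar C S) (g : A → M.Prec)

lemma Model.σE_comap [Nonempty A] (e : SE S) : (M.comap g).σE e = g ⁻¹' M.σE e := by
  induction e with
  | star | sym => rfl
  | union _ _ ih₁ ih₂ | inter _ _ ih₁ ih₂ | diff _ _ ih₁ ih₂ =>
    simp only [Model.σE, ih₁, ih₂]; rfl

lemma Model.sat_comap_of_boxfree [Nonempty A] {φ : Fm P ar C S} (hφ : φ.boxfree) (a : A)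
    (v : ℕ → M.Dom) : (M.comap g).sat a v φ ↔ M.sat (g a) v φ := by
  induction φ generalizing v with
  | atom | eq => rfl
  | neg φ ih => exact not_congr (ih hφ v)
  | conj φ ψ ih₁ ih₂ => exact and_congr (ih₁ hφ.1 v) (ih₂ hφ.2 v)
  | all x φ ih => exact forall_congr' fun δ => ih hφ _
  | box => exact hφ.elim

def Model.HitsCounterexamples (φ : Fm P ar C S) : Prop :=
  ∀ e ψ, Fm.box e ψ ∈ φ.Sub → ∀ (v : ℕ → M.Dom), ∀ π ∈ M.σE e, ¬ M.sat π v ψ →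
    ∃ a, g a ∈ M.σE e ∧ ¬ M.sat (g a) v ψ

variable {M g}

lemma Model.HitsCounterexamples.mono {φ χ : Fm P ar C S} (h : M.HitsCounterexamples g φ)
    (hsub : χ.Sub ⊆ φ.Sub) : M.HitsCounterexamples g χ :=
  fun e ψ hψ => h e ψ (hsub hψ)

lemma Model.sat_comap [Nonempty A] {φ : Fm P ar C S} (hφ : φ.ssnf)
    (hg : M.HitsCounterexamples g φ) (a : A) (v : ℕ → M.Dom) :
    (M.comap g).sat a v φ ↔ M.sat (g a) v φ := by
  induction φ generalizing a v with
  | atom | eq => rfl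
  | neg φ ih =>
    exact not_congr (ih hφ (hg.mono (Set.subset_insert _ _)) a v)
  | conj φ ψ ih₁ ih₂ =>
    exact and_congr
      (ih₁ hφ.1 (hg.mono (Set.subset_union_left.trans (Set.subset_insert _ _))) a v)
      (ih₂ hφ.2 (hg.mono (Set.subset_union_right.trans (Set.subset_insert _ _))) a v)
  | all x φ ih =>
    exact forall_congr' fun δ => ih hφ (hg.mono (Set.subset_insert _ _)) a _
  | box e ψ =>
    have hψ (a' : A) : (M.comap g).sat a' v ψ ↔ M.sat (g a') v ψ :=
      M.sat_comap_of_boxfree g hφ a' v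
    change (∀ a' ∈ (M.comap g).σE e, _) ↔ ∀ π ∈ M.σE e, M.sat π v ψ
    rw [M.σE_comap g e]
    refine ⟨fun h π hπ => ?_, fun h a' ha' => (hψ a').mpr (h _ ha')⟩
    by_contra hπψ
    obtain ⟨a', ha', hψ'⟩ := hg e ψ (Fm.mem_Sub_self _) v π hπ hπψ
    exact hψ' ((hψ a').mp (h a' ha'))

lemma Model.satM_comap [Nonempty A] {φ : Fm P ar C S} (hφ : φ.ssnf)
    (hg : M.HitsCounterexamples g φ) (hM : M.satM φ) : (M.comap g).satM φ :=
  fun a v => (Model.sat_comap hφ hg a v).mpr (hM (g a) v)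

end Comap

noncomputable def Model.counterexample (M : Model P ar C S) (v : ℕ → M.Dom) :
    Fm P ar C S → M.Prec
  | .box e ψ => Classical.epsilon fun π => π ∈ M.σE e ∧ ¬ M.sat π v ψ
  | _ => Classical.arbitrary _

lemma Model.counterexample_box (M : Model P ar C S) {v : ℕ → M.Dom} {e : SE S}
    {ψ : Fm P ar C S} {π : M.Prec} (hπ : π ∈ M.σE e) (hψ : ¬ M.sat π v ψ) :
    M.counterexample v (.box e ψ) ∈ M.σE e ∧ ¬ M.sat (M.counterexample v (.box e ψ)) v ψ :=
  Classical.epsilon_spec (p := fun π => π ∈ M.σE e ∧ ¬ M.sat π v ψ) ⟨π, hπ, hψ⟩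

lemma Model.exists_hitsCounterexamples_fin_size (M : Model P ar C S) {φ : Fm P ar C S}
    (hφ : φ.sentential) : ∃ g : Fin φ.size → M.Prec, M.HitsCounterexamples g φ := by
  have : Finite φ.Sub := φ.finite_Sub
  let enum : Fin φ.size ≃ φ.Sub := (Finite.equivFin φ.Sub).symm
  let v₀ : ℕ → M.Dom := fun _ => Classical.arbitrary _
  refine ⟨fun i => M.counterexample v₀ (enum i), fun e ψ hbox v π hπ hψ => ?_⟩
  have hclosed : ψ.fv = ∅ := (Fm.sentential_of_mem_Sub hφ hbox).1
  obtain ⟨he, hψ₀⟩ := M.counterexample_box hπ ((M.sat_of_fv_eq_empty hclosed v v₀).not.mp hψ)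
  refine ⟨enum.symm ⟨_, hbox⟩, ?_⟩
  simpa only [Equiv.apply_symm_apply, M.sat_of_fv_eq_empty hclosed v v₀] using ⟨he, hψ₀⟩

theorem exists_comap_fin_size_satM {M : Model P ar C S} {φ : Fm P ar C S}
    (hs : φ.sentential) (hn : φ.ssnf) (hM : M.satM φ) :
    ∃ g : Fin φ.size → M.Prec, (M.comap g).satM φ := by
  obtain ⟨g, hg⟩ := M.exists_hitsCounterexamples_fin_size hs
  exact ⟨g, Model.satM_comap hn hg hM⟩

lemma FOModel.sat_conjList (I : FOModel Q arQ C) (v : ℕ → I.Dom) (l : List (FO Q arQ C)) :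
    I.sat v (FO.conjList l) ↔ ∀ ψ ∈ l, I.sat v ψ := by
  induction l with
  | nil => simp [FO.conjList, FOModel.sat]
  | cons χ l ih => simp [FO.conjList, FOModel.sat, ih]

lemma FOModel.sat_conjList_univ [Fintype Pre] (I : FOModel Q arQ C) (v : ℕ → I.Dom)
    (f : Pre → FO Q arQ C) :
    I.sat v (FO.conjList (Finset.univ.toList.map f)) ↔ ∀ π, I.sat v (f π) := by
  simp [I.sat_conjList]

/-- The standpoint structure `M_I` of the paper. -/
def FOModel.toModel [Nonempty Pre] (I : FOModel (TQ P S Pre) (tAr ar) C) : Model P ar C S where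
  Dom := I.Dom
  dom_ne := I.dom_ne
  Prec := Pre
  prec_ne := ‹_›
  σ s := {π | I.interp (.inr (some s, π)) Fin.elim0}
  interpP π p := I.interp (.inl (p, π))
  interpC := I.interpC

lemma FOModel.sat_nullary_iff (I : FOModel (TQ P S Pre) (tAr ar) C) (o : Option S) (π : Pre)
    (ts : Fin 0 → C ⊕ ℕ) (v : ℕ → I.Dom) :
    I.sat v (.atom (.inr (o, π)) ts) ↔ I.interp (.inr (o, π)) Fin.elim0 :=
  iff_of_eq (congrArg (I.interp _) (Subsingleton.elim (α := Fin 0 → I.Dom) _ _))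

section Translation

variable [Nonempty Pre] (I : FOModel (TQ P S Pre) (tAr ar) C)
  (hstar : ∀ π, I.interp (.inr (none, π)) Fin.elim0)
include hstar

lemma FOModel.sat_transE_iff (v : ℕ → I.Dom) (π : I.toModel.Prec) (e : SE S) :
    I.sat v (transE π e) ↔ π ∈ I.toModel.σE e := by
  induction e with
  | star => exact iff_of_true ((I.sat_nullary_iff _ _ _ v).mpr (hstar π)) trivial
  | sym s => exact I.sat_nullary_iff _ _ _ v
  | union e₁ e₂ ih₁ ih₂ =>
    simp only [transE, FOModel.sat, Model.σE, Set.mem_union, ih₁, ih₂]; tauto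
  | inter e₁ e₂ ih₁ ih₂ => simp only [transE, FOModel.sat, Model.σE, Set.mem_inter_iff, ih₁, ih₂]
  | diff e₁ e₂ ih₁ ih₂ => simp only [transE, FOModel.sat, Model.σE, Set.mem_sdiff, ih₁, ih₂]

variable [Fintype Pre]

lemma FOModel.sat_transF_iff (φ : Fm P ar C S) (π : Pre) (v : ℕ → I.Dom) :
    I.sat v (transF π φ) ↔ I.toModel.sat π v φ := by
  induction φ generalizing π v with
  | atom | eq => rfl
  | neg φ ih => exact not_congr (ih π v)
  | conj φ ψ ih₁ ih₂ => exact and_congr (ih₁ π v) (ih₂ π v)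
  | all x φ ih => exact forall_congr' fun δ => ih π _
  | box e ψ ih =>
    simp only [transF, FOModel.sat_conjList_univ, FO.impl, FOModel.sat, not_and, not_not, ih]
    exact forall_congr' fun π' => imp_congr_left (I.sat_transE_iff hstar v π' e)

end Translation

lemma FOModel.satM_TransN_iff [Fintype Pre] [Nonempty Pre]
    (I : FOModel (TQ P S Pre) (tAr ar) C) (φ : Fm P ar C S) :
    I.satM (TransN φ) ↔ (∀ π, I.interp (.inr (none, π)) Fin.elim0) ∧ I.toModel.satM φ := by
  constructor
  · intro h
    obtain ⟨d⟩ := I.dom_ne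
    have hstar π :=
      (I.sat_nullary_iff _ π _ _).mp ((I.sat_conjList_univ _ _).mp (h fun _ => d).2 π)
    exact ⟨hstar, fun π v =>
      (I.sat_transF_iff hstar φ π v).mp ((I.sat_conjList_univ v _).mp (h v).1 π)⟩
  · rintro ⟨hstar, hφ⟩ v
    exact ⟨(I.sat_conjList_univ v _).mpr fun π => (I.sat_transF_iff hstar φ π v).mpr (hφ π v),
      (I.sat_conjList_univ v _).mpr fun π => (I.sat_nullary_iff _ π _ v).mpr (hstar π)⟩

/-- Satisfiability via translation: a sentential SSNF formula φ is satisfiable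
iff Trans_{|φ|}(φ) is satisfiable in first-order logic, with |φ| the number of
subformulas of φ. -/
theorem sat_iff_transN_sat (P : Type) (ar : P → ℕ) (C S : Type)
    (φ : Fm P ar C S) (hs : φ.sentential) (hn : φ.ssnf) :
    satisfiable φ ↔
      fosatisfiable (TransN (Pre := Fin φ.size) (ar := ar) (S := S) φ) := by
  constructor
  · rintro ⟨M, hM⟩
    obtain ⟨g, hg⟩ := exists_comap_fin_size_satM hs hn hM
    -- `M.toFO.toModel` is `M` by definition.
    exact ⟨(M.comap g).toFO,
      (FOModel.satM_TransN_iff (Pre := Fin φ.size) _ φ).mpr ⟨fun _ => trivial, hg⟩⟩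
  · rintro ⟨I, hI⟩
    exact ⟨I.toModel, ((FOModel.satM_TransN_iff I φ).mp hI).2⟩

end FOSL
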